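/- arXiv:0905.2113 — 2 statements merged into one kernel-verified Lean document; each statement's English description precedes it below -/
import Mathlib

section
/- h(r) tends to −∞ as r tends to 0 from the right, i.e. Tendsto h (𝓝[>] 0) atBot. -/
open MeasureTheory Real Filter

/-- `u r z = √(z(1−rz)/(z+r))`, the real branch of `|w_r|` on `(0, 1/r)`. -/
noncomputable def u (r z : ℝ) : ℝ := Real.sqrt (z * (1 - r * z) / (z + r))

/-- The period function `h` of the candidate maximal Klein bottles. -/
noncomputable def h (r : ℝ) : ℝ :=
  ∫ z in (0:ℝ)..(1/r),
    -2 * u r z * (-1 + z + r * (2 - 3 * z + r * (-4 + 4 * r + 3 * z))) / (r + z)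

/-- `A₁ r = ∫₀^{1/r} u_r(z) dz`. -/
noncomputable def A₁ (r : ℝ) : ℝ := ∫ z in (0:ℝ)..(1/r), u r z

/-- `A₂ r = ∫₀^{1/r} u_r(z)/(z+r) dz`. -/
noncomputable def A₂ (r : ℝ) : ℝ := ∫ z in (0:ℝ)..(1/r), u r z / (z + r)

/-!
Writing `q(r) = 2(1 - 3r + 3r²) ≥ 1/2` and `p(r) = 2(1 - r)(1 + r²) ∈ [0, 2]`, the integrand of `h`
is `-q(r) u + p(r) u/(z + r)`, and `0 ≤ u ≤ 1`. Hence for small `r`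
`h(r) ≤ -½ ∫₀^{1/r} u + 2 ∫₀^{1/r} dz/(z + r)`. The first integral is at least `1/(4r) - 1/2`
because `u ≥ 1/2` on `[1, 1/(2r)]`, while the second is only `log(1 + 1/r²)`, so the linear
growth in `1/r` wins.
-/

open Set

noncomputable def periodIntegrand (r z : ℝ) : ℝ :=
  -2 * u r z * (-1 + z + r * (2 - 3 * z + r * (-4 + 4 * r + 3 * z))) / (r + z)

lemma u_nonneg (r z : ℝ) : 0 ≤ u r z := Real.sqrt_nonneg _

lemma u_le_one {r z : ℝ} (hr : 0 < r) (hz : 0 ≤ z) : u r z ≤ 1 := by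
  rw [u, Real.sqrt_le_one, div_le_one (by positivity)]
  nlinarith [sq_nonneg z]

lemma one_half_le_u {r z : ℝ} (hr : 0 < r) (hz : 1 ≤ z) (hrz : 2 * r * z ≤ 1) :
    1 / 2 ≤ u r z := by
  rw [u, Real.le_sqrt' (by norm_num), le_div_iff₀ (by positivity)]
  nlinarith

lemma continuousOn_u {r : ℝ} (hr : 0 < r) : ContinuousOn (u r) (Ici 0) := by
  refine Real.continuous_sqrt.comp_continuousOn (ContinuousOn.div (by fun_prop) (by fun_prop) ?_)
  intro z (hz : 0 ≤ z)
  positivity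

lemma continuousOn_periodIntegrand {r : ℝ} (hr : 0 < r) :
    ContinuousOn (periodIntegrand r) (Ici 0) := by
  refine ContinuousOn.div ((continuousOn_const.mul (continuousOn_u hr)).mul (by fun_prop))
    (by fun_prop) ?_
  intro z (hz : 0 ≤ z)
  positivity

lemma periodIntegrand_eq {r z : ℝ} (hr : 0 < r) (hz : 0 ≤ z) :
    periodIntegrand r z =
      -(2 * (1 - 3 * r + 3 * r ^ 2)) * u r z + 2 * (1 - r) * (1 + r ^ 2) * (u r z / (z + r)) := by
  have hzr : z + r ≠ 0 := by positivity
  rw [periodIntegrand, add_comm r z]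
  field_simp
  ring

lemma periodIntegrand_le {r z : ℝ} (hr : 0 < r) (hr1 : r ≤ 1) (hz : 0 ≤ z) :
    periodIntegrand r z ≤ -(1 / 2) * u r z + 2 * (z + r)⁻¹ := by
  have hu0 := u_nonneg r z
  have hu1 := u_le_one hr hz
  have hzr : 0 < z + r := by positivity
  have hq : 1 / 2 ≤ 2 * (1 - 3 * r + 3 * r ^ 2) := by nlinarith [sq_nonneg (r - 1 / 2)]
  have hp0 : 0 ≤ 2 * (1 - r) * (1 + r ^ 2) := by have := sq_nonneg r; positivity
  have hp2 : 2 * (1 - r) * (1 + r ^ 2) ≤ 2 := by nlinarith [sq_nonneg r]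
  have hv : u r z / (z + r) ≤ (z + r)⁻¹ := by
    rw [div_eq_mul_inv]
    exact mul_le_of_le_one_left (by positivity) hu1
  have hv0 : 0 ≤ u r z / (z + r) := by positivity
  rw [periodIntegrand_eq hr hz]
  nlinarith

lemma intervalIntegrable_of_continuousOn_Ici {f : ℝ → ℝ} (hf : ContinuousOn f (Ici 0)) {a b : ℝ}
    (ha : 0 ≤ a) (hb : 0 ≤ b) : IntervalIntegrable f volume a b :=
  (hf.mono fun _ hx => (le_min ha hb).trans hx.1).intervalIntegrable

lemma integral_inv_add {r : ℝ} (hr : 0 < r) :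
    ∫ z in (0:ℝ)..(1/r), (z + r)⁻¹ = Real.log ((1 / r + r) / r) := by
  rw [intervalIntegral.integral_comp_add_right (fun x => x⁻¹), zero_add,
    integral_inv_of_pos hr (by positivity)]

lemma le_A₁ {r : ℝ} (hr : 0 < r) (hr2 : r ≤ 1 / 2) : 1 / (4 * r) - 1 / 2 ≤ A₁ r := by
  have h1 : 1 ≤ 1 / (2 * r) := by rw [le_div_iff₀ (by positivity)]; linarith
  have h2 : 1 / (2 * r) ≤ 1 / r := one_div_le_one_div_of_le hr (by linarith)
  calc 1 / (4 * r) - 1 / 2 = ∫ _ in (1:ℝ)..(1 / (2 * r)), (1 / 2 : ℝ) := by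
        rw [intervalIntegral.integral_const, smul_eq_mul]; field_simp; ring
    _ ≤ ∫ z in (1:ℝ)..(1 / (2 * r)), u r z := by
        refine intervalIntegral.integral_mono_on h1 intervalIntegrable_const
          (intervalIntegrable_of_continuousOn_Ici (continuousOn_u hr) zero_le_one
            (by positivity)) fun z hz => one_half_le_u hr hz.1
              (by linarith [(le_div_iff₀ (by positivity : (0:ℝ) < 2 * r)).1 hz.2])
    _ ≤ A₁ r :=
        intervalIntegral.integral_mono_interval zero_le_one h1 h2
          (Eventually.of_forall fun z => u_nonneg r z)
          (intervalIntegrable_of_continuousOn_Ici (continuousOn_u hr) le_rfl (by positivity))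

lemma h_le_const_add_log_inv_sub {r : ℝ} (hr : 0 < r) (hr2 : r ≤ 1 / 2) :
    h r ≤ 1 / 4 + 2 * Real.log 2 + 4 * Real.log r⁻¹ - 1 / 8 * r⁻¹ := by
  have hb : (0:ℝ) ≤ 1 / r := by positivity
  have hinv : ContinuousOn (fun z : ℝ => (z + r)⁻¹) (Ici 0) :=
    ContinuousOn.inv₀ (by fun_prop) fun z (hz : 0 ≤ z) => by positivity
  have hlog : Real.log ((1 / r + r) / r) ≤ Real.log 2 + 2 * Real.log r⁻¹ := by
    calc Real.log ((1 / r + r) / r) ≤ Real.log (2 * r⁻¹ ^ 2) := by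
          refine Real.log_le_log (by positivity) ?_
          field_simp
          nlinarith
      _ = Real.log 2 + 2 * Real.log r⁻¹ := by
          rw [Real.log_mul (by norm_num) (by positivity), Real.log_pow]
          push_cast
          ring
  have hA := le_A₁ hr hr2
  have hu := (intervalIntegrable_of_continuousOn_Ici (continuousOn_u hr) le_rfl hb).const_mul
    (-(1 / 2))
  have hv := (intervalIntegrable_of_continuousOn_Ici hinv le_rfl hb).const_mul 2
  calc h r ≤ ∫ z in (0:ℝ)..(1/r), (-(1 / 2) * u r z + 2 * (z + r)⁻¹) :=
        intervalIntegral.integral_mono_on hb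
          (intervalIntegrable_of_continuousOn_Ici (continuousOn_periodIntegrand hr) le_rfl hb)
          (hu.add hv) fun z hz => periodIntegrand_le hr (by linarith) hz.1
    _ = -(1 / 2) * A₁ r + 2 * Real.log ((1 / r + r) / r) := by
        rw [intervalIntegral.integral_add hu hv, intervalIntegral.integral_const_mul,
          intervalIntegral.integral_const_mul, integral_inv_add hr, A₁]
    _ ≤ _ := by
        have : 1 / (4 * r) = r⁻¹ / 4 := by field_simp
        rw [this] at hA
        linarith

lemma tendsto_const_add_mul_log_sub_mul_atBot (a b : ℝ) {c : ℝ} (hc : 0 < c) :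
    Tendsto (fun t => a + b * Real.log t - c * t) atTop atBot := by
  have hlog := Real.isLittleO_log_id_atTop.bound (c := c / (2 * (|b| + 1))) (by positivity)
  refine tendsto_atBot_mono' atTop ?_
    (tendsto_atBot_add_const_right atTop a
      (tendsto_id.const_mul_atTop_of_neg (by linarith : -(c / 2) < 0)))
  filter_upwards [hlog, eventually_ge_atTop 0] with t ht ht0
  simp only [Real.norm_eq_abs, id, abs_of_nonneg ht0] at ht
  have hbt : b * Real.log t ≤ |b| * |Real.log t| := (le_abs_self _).trans (abs_mul _ _).le
  have : |b| * |Real.log t| ≤ c / 2 * t := by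
    calc |b| * |Real.log t| ≤ (|b| + 1) * (c / (2 * (|b| + 1)) * t) := by
          gcongr; linarith
      _ = c / 2 * t := by field_simp
  simp only [id_eq]
  linarith

theorem stmt_10 : Filter.Tendsto h (nhdsWithin 0 (Set.Ioi 0)) Filter.atBot := by
  refine tendsto_atBot_mono' _ ?_ ((tendsto_const_add_mul_log_sub_mul_atBot
    (1 / 4 + 2 * Real.log 2) 4 (by norm_num : (0:ℝ) < 1 / 8)).comp tendsto_inv_nhdsGT_zero)
  filter_upwards [Ioo_mem_nhdsGT (by norm_num : (0:ℝ) < 1 / 2)] with r hr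
  exact h_le_const_add_log_inv_sub hr.1 hr.2.le
end

section
/- Let r > 0 and x ∈ (0, 1/r). Then the function K(z) = −u_r(z)·(r + 2z − 2rz − rz² + 4r²z²)/(r²·z) is differentiable at x with derivative K′(x) = −2·u_r(x)·(−r + 4r² − x + 3rx)/(r(r+x)) − u_r(x)·(1+x)²·(1+x²)/(2x²(r+x)(rx−1)). -/
open MeasureTheory Real Filter

/-! Since `u_r² = z(1 - rz)/(z + r)`, the derivative of `u_r` is `u_r` times a rational function
of `z`. The quotient rule then reduces the claim to an identity between rational functions,
multiplied by `u_r(x)`. -/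

theorem HasDerivAt.sqrt' {f : ℝ → ℝ} {f' x : ℝ} (hf : HasDerivAt f f' x)
    (hx : f x ≠ 0) :
    HasDerivAt (fun y => √(f y)) (√(f x) * f' / (2 * f x)) x := by
  refine (hf.sqrt hx).congr_deriv ?_
  rcases hx.lt_or_gt with hneg | hpos
  · simp [Real.sqrt_eq_zero'.2 hneg.le]
  · field_simp
    rw [Real.sq_sqrt hpos.le, mul_comm]

theorem hasDerivAt_u_radicand {r x : ℝ} (hx : x + r ≠ 0) :
    HasDerivAt (fun z => z * (1 - r * z) / (z + r))
      (r * (1 - 2 * r * x - x ^ 2) / (x + r) ^ 2) x := by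
  have hnum : HasDerivAt (fun z => z * (1 - r * z)) (1 - 2 * r * x) x :=
    ((hasDerivAt_id' x).fun_mul (((hasDerivAt_id' x).const_mul r).const_sub 1)).congr_deriv
      (by ring)
  exact (hnum.fun_div ((hasDerivAt_id' x).add_const r) hx).congr_deriv (by ring)

theorem hasDerivAt_u {r x : ℝ} (hx : x * (1 - r * x) / (x + r) ≠ 0) :
    HasDerivAt (u r)
      (u r x * (r * (1 - 2 * r * x - x ^ 2)) / (2 * x * (1 - r * x) * (x + r))) x := by
  have hx0 : x ≠ 0 := fun h => hx (by simp [h])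
  have hrx : 1 - r * x ≠ 0 := fun h => hx (by simp [h])
  have hxr : x + r ≠ 0 := fun h => hx (by simp [h])
  refine ((hasDerivAt_u_radicand hxr).sqrt' hx).congr_deriv ?_
  simp only [u]
  field_simp

theorem stmt_18 (r : ℝ) (hr : 0 < r) (x : ℝ) (hx : x ∈ Set.Ioo (0:ℝ) (1/r)) :
    HasDerivAt
      (fun z : ℝ =>
        -u r z * (r + 2 * z - 2 * r * z - r * z ^ 2 + 4 * r ^ 2 * z ^ 2) / (r ^ 2 * z))
      (-2 * u r x * (-r + 4 * r ^ 2 - x + 3 * r * x) / (r * (r + x))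
        - u r x * (1 + x) ^ 2 * (1 + x ^ 2) / (2 * x ^ 2 * (r + x) * (r * x - 1))) x := by
  obtain ⟨hx0, hx1⟩ := hx
  have hrx : r * x < 1 := by rwa [lt_div_iff₀ hr, mul_comm] at hx1
  have hradicand : 0 < x * (1 - r * x) / (x + r) := by
    apply div_pos <;> nlinarith
  have hP : HasDerivAt (fun z => r + 2 * z - 2 * r * z - r * z ^ 2 + 4 * r ^ 2 * z ^ 2)
      (2 - 2 * r - 2 * r * x + 8 * r ^ 2 * x) x := by
    have hz := hasDerivAt_id' x
    have hz2 := hasDerivAt_pow 2 x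
    refine ((((hz.const_mul 2).const_add r).fun_sub (hz.const_mul (2 * r))).fun_sub
      (hz2.const_mul r)).fun_add (hz2.const_mul (4 * r ^ 2)) |>.congr_deriv ?_
    push_cast
    ring
  have hD : HasDerivAt (fun z => r ^ 2 * z) (r ^ 2) x := by
    simpa using (hasDerivAt_id' x).const_mul (r ^ 2)
  refine ((hasDerivAt_u hradicand.ne').fun_neg.fun_mul hP).fun_div hD (by positivity)
    |>.congr_deriv ?_
  have hrx' : r * x - 1 ≠ 0 := by linarith
  have hrx'' : 1 - r * x ≠ 0 := by linarith
  field_simp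
  ring
end
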